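/- Let A and L be positive bounded operators on a real separable Hilbert space H and λ > 0, and set Q_λ := ‖(L + λI)^{1/2}(A + λI)^{-1/2}‖. Then ‖(A + λI)^{-1/2}(L − A)(A + λI)^{-1/2}‖ ≤ Q_λ^2 · ‖(L + λI)^{-1/2}(L − A)(L + λI)^{-1/2}‖. -/

import Mathlib

open ContinuousLinearMap

/-- `S` is the positive square root of the positive operator `T`. -/
def IsSqrtOf {E : Type*} [NormedAddCommGroup E] [InnerProductSpace ℝ E]
    [CompleteSpace E] (S T : E →L[ℝ] E) : Prop :=
  S.IsPositive ∧ S ∘L S = T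

/-- `S` is the inverse `T⁻¹` of the operator `T`. -/
def IsInvOf {E : Type*} [NormedAddCommGroup E] [InnerProductSpace ℝ E]
    [CompleteSpace E] (S T : E →L[ℝ] E) : Prop :=
  S ∘L T = 1 ∧ T ∘L S = 1

/-- `S` is the inverse square root `T^{-1/2}` of the positive invertible operator `T`,
i.e. `S` is positive and `S ∘ S = T⁻¹`. -/
def IsInvSqrtOf {E : Type*} [NormedAddCommGroup E] [InnerProductSpace ℝ E]
    [CompleteSpace E] (S T : E →L[ℝ] E) : Prop :=
  S.IsPositive ∧ IsInvOf (S ∘L S) T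

/-- `p` is the family of real powers `t ↦ A ^ t` (for `t ≥ 0`) of the positive operator `A`,
given by the continuous functional calculus; it is characterized by the semigroup property
together with positivity, continuity, `p 0 = 1` and `p 1 = A`. -/
def IsPowerFamilyOf {E : Type*} [NormedAddCommGroup E] [InnerProductSpace ℝ E]
    [CompleteSpace E] (A : E →L[ℝ] E) (p : ℝ → E →L[ℝ] E) : Prop :=
  p 0 = 1 ∧ p 1 = A ∧ (∀ s t : ℝ, 0 ≤ s → 0 ≤ t → p (s + t) = p s ∘L p t) ∧
    (∀ t : ℝ, 0 ≤ t → (p t).IsPositive) ∧ ContinuousOn p (Set.Ici (0 : ℝ))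

/-!
Write `s = (L + λ)^{1/2}`, `t = (L + λ)^{-1/2}` and `a = (A + λ)^{-1/2}`. Since `t² s² = s² t² = 1`,
`a (L - A) a = k⋆ (t (L - A) t) k` with `k = (t s)(s a)`, so `‖a (L - A) a‖ ≤ ‖k‖² ‖t (L - A) t‖`.
Moreover `(t s)⋆ (t s) = s t² s` is a projection, hence `‖t s‖ ≤ 1` and `‖k‖ ≤ ‖s a‖`.
-/

section StarRing

variable {R : Type*} [Ring R] [StarRing R] {a s t : R}

theorem conj_eq_star_mul_conj_mul (m : R) (ha : IsSelfAdjoint a) (hs : IsSelfAdjoint s)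
    (ht : IsSelfAdjoint t) (hts : t * t * (s * s) = 1) (hst : s * s * (t * t) = 1) :
    a * m * a = star (t * s * (s * a)) * (t * m * t) * (t * s * (s * a)) := by
  simp only [star_mul, ha.star_eq, hs.star_eq, ht.star_eq]
  calc a * m * a = a * (s * s * (t * t)) * m * (t * t * (s * s)) * a := by
        rw [hts, hst, mul_one, mul_one]
    _ = a * s * (s * t) * (t * m * t) * (t * s * (s * a)) := by simp only [mul_assoc]

theorem isStarProjection_star_mul_self_of_sq_mul_sq_eq_one (hs : IsSelfAdjoint s)
    (ht : IsSelfAdjoint t) (hst : s * s * (t * t) = 1) :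
    IsStarProjection (star (t * s) * (t * s)) := by
  refine ⟨?_, IsSelfAdjoint.star_mul_self _⟩
  simp only [star_mul, hs.star_eq, ht.star_eq]
  calc s * t * (t * s) * (s * t * (t * s)) = s * t * t * (s * s * (t * t)) * s := by simp only [mul_assoc]
    _ = s * t * (t * s) := by rw [hst, mul_one, mul_assoc]

end StarRing

section CStarRing

variable {R : Type*} [NormedRing R] [StarRing R] [CStarRing R]

theorem norm_le_one_of_isStarProjection_star_mul_self {p : R}
    (hp : IsStarProjection (star p * p)) : ‖p‖ ≤ 1 := by
  have h : ‖p‖ * ‖p‖ ≤ 1 := CStarRing.norm_star_mul_self (x := p) ▸ hp.norm_le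
  nlinarith [norm_nonneg p]

theorem norm_star_mul_mul_le (k n : R) : ‖star k * n * k‖ ≤ ‖k‖ ^ 2 * ‖n‖ :=
  calc ‖star k * n * k‖ ≤ ‖star k‖ * ‖n‖ * ‖k‖ := norm_mul₃_le
    _ = ‖k‖ ^ 2 * ‖n‖ := by rw [norm_star]; ring

theorem norm_conj_le_of_sq_mul_sq_eq_one {a s t : R} (m : R) (ha : IsSelfAdjoint a)
    (hs : IsSelfAdjoint s) (ht : IsSelfAdjoint t) (hts : t * t * (s * s) = 1)
    (hst : s * s * (t * t) = 1) :
    ‖a * m * a‖ ≤ ‖s * a‖ ^ 2 * ‖t * m * t‖ := by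
  have hts_le : ‖t * s‖ ≤ 1 := norm_le_one_of_isStarProjection_star_mul_self
    (isStarProjection_star_mul_self_of_sq_mul_sq_eq_one hs ht hst)
  have hk : ‖t * s * (s * a)‖ ≤ ‖s * a‖ :=
    calc ‖t * s * (s * a)‖ ≤ ‖t * s‖ * ‖s * a‖ := norm_mul_le _ _
      _ ≤ ‖s * a‖ := mul_le_of_le_one_left (norm_nonneg _) hts_le
  calc ‖a * m * a‖ ≤ ‖t * s * (s * a)‖ ^ 2 * ‖t * m * t‖ := by
        rw [conj_eq_star_mul_conj_mul m ha hs ht hts hst]; exact norm_star_mul_mul_le _ _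
    _ ≤ ‖s * a‖ ^ 2 * ‖t * m * t‖ := by gcongr

end CStarRing

theorem stmt11_general {H : Type*} [NormedAddCommGroup H] [InnerProductSpace ℝ H] [CompleteSpace H]
    (A L : H →L[ℝ] H)
    (lam : ℝ)
    (SAinv : H →L[ℝ] H) (hSAinv : IsInvSqrtOf SAinv (A + lam • (1 : H →L[ℝ] H)))
    (SL : H →L[ℝ] H) (hSL : IsSqrtOf SL (L + lam • (1 : H →L[ℝ] H)))
    (SLinv : H →L[ℝ] H) (hSLinv : IsInvSqrtOf SLinv (L + lam • (1 : H →L[ℝ] H))) :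
    ‖SAinv ∘L (L - A) ∘L SAinv‖ ≤ ‖SL ∘L SAinv‖ ^ 2 * ‖SLinv ∘L (L - A) ∘L SLinv‖ := by
  obtain ⟨hSAinv_pos, -⟩ := hSAinv
  obtain ⟨hSL_pos, hSL_sq⟩ := hSL
  obtain ⟨hSLinv_pos, hinv_left, hinv_right⟩ := hSLinv
  rw [← hSL_sq] at hinv_left hinv_right
  simp only [← mul_def, ← mul_assoc] at hinv_left hinv_right ⊢
  exact norm_conj_le_of_sq_mul_sq_eq_one (L - A) hSAinv_pos.isSelfAdjoint
    hSL_pos.isSelfAdjoint hSLinv_pos.isSelfAdjoint hinv_left hinv_right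

/-- For positive operators `A`, `L` on `H`, `lam > 0` and
`Q_lam := ‖(L + lam I)^{1/2}(A + lam I)^{-1/2}‖`, one has
`‖(A + lam I)^{-1/2}(L − A)(A + lam I)^{-1/2}‖ ≤ Q_lam^2 ‖(L + lam I)^{-1/2}(L − A)(L + lam I)^{-1/2}‖`. -/
theorem stmt11 {H : Type*} [NormedAddCommGroup H] [InnerProductSpace ℝ H] [CompleteSpace H]
    [TopologicalSpace.SeparableSpace H]
    (A L : H →L[ℝ] H) (hA : A.IsPositive) (hL : L.IsPositive)
    (lam : ℝ) (hlam : 0 < lam)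
    (SAinv : H →L[ℝ] H) (hSAinv : IsInvSqrtOf SAinv (A + lam • (1 : H →L[ℝ] H)))
    (SL : H →L[ℝ] H) (hSL : IsSqrtOf SL (L + lam • (1 : H →L[ℝ] H)))
    (SLinv : H →L[ℝ] H) (hSLinv : IsInvSqrtOf SLinv (L + lam • (1 : H →L[ℝ] H))) :
    ‖SAinv ∘L (L - A) ∘L SAinv‖ ≤ ‖SL ∘L SAinv‖ ^ 2 * ‖SLinv ∘L (L - A) ∘L SLinv‖ :=
  stmt11_general A L lam SAinv hSAinv SL hSL SLinv hSLinv
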